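/- (Robust optimality for the one-sided problem.) Let A, B₁, B₂ be real symmetric n×n matrices, a, b₁, b₂ ∈ ℝ^n, and β, μ₁, μ₂, δ₁, δ₂ ∈ ℝ with μ₁ < μ₂ and δ₁ < δ₂. Consider the robust problem: minimize f(x) = ½xᵀAx + aᵀx subject to ½xᵀ(B₁+μB₂)x + (b₁+δb₂)ᵀx ≤ β for all μ ∈ [μ₁,μ₂] and all δ ∈ [δ₁,δ₂]. Let x̄ be feasible and set γ = −f(x̄). Assume that Ω_W^β (defined with this γ) is convex and that there exists x₀ ∈ ℝ^n with ½x₀ᵀ(B₁+μB₂)x₀ + (b₁+δb₂)ᵀx₀ < β for all μ ∈ [μ₁,μ₂] and δ ∈ [δ₁,δ₂]. Then x̄ is a global solution of the robust problem if and only if there exist λ ≥ 0, μ ∈ [μ₁,μ₂] and δ ∈ [δ₁,δ₂] such that: (a) (A + λ(B₁+μB₂))x̄ = −(a + λ(b₁+δb₂)); (b) λ(½x̄ᵀ(B₁+μB₂)x̄ + (b₁+δb₂)ᵀx̄ − β) = 0; (c) A + λ(B₁+μB₂) is positive semidefinite. -/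

import Mathlib

/-!
Homogenise with `y = (x, t)`: let `q₀(y) = ½xᵀAx + t aᵀx − f(x̄) t²` and let `g(μ, δ)` be the
homogenised constraint forms. If `x̄` is optimal, `q₀` and the `g` at the four vertices `(μᵢ, δⱼ)`
are never negative simultaneously: a common negative point with `t ≠ 0` rescales to a better
feasible point, and one with `t = 0` is a direction of negative curvature along which `x̄` can be
improved. Hence `0 ∉ Ω_W^β`, and separating the convex open set `Ω_W^β` from `0` (the Slater
point makes the multiplier of `q₀` positive) gives `q₀ + l₁ max_μ g(μ, δ₁) + l₂ max_μ g(μ, δ₂) ≥ 0`.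
Since `g` is affine in `(μ, δ)` and the maximising `μ` does not depend on `δ`, the two terms merge
into `λ max_μ g(μ, δ)`; Yuan's lemma, which rests on Dines' theorem that the joint range of two
quadratic forms is convex, then trades the maximum over the two `μ`-vertices for a single `μ`.
The Lagrangian form `q₀ + λ g(μ, δ)` is thus nonnegative, and nonpositive at `(x̄, 1)` by
feasibility, which yields stationarity, complementarity and positive semidefiniteness. The
converse is weak duality.
-/

open Matrix Set Pointwise

/-- The set `Ω_W^β ⊆ ℝ³`: the Minkowski sum of the image of `y = (x,t) ∈ ℝ^{n+1}` under the
three quadratic forms `½yᵀH₀y`, `max_{μ∈[μ₁,μ₂]} ½yᵀ(W_{1β}+μW₂)y`,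
`max_{μ∈[μ₁,μ₂]} ½yᵀ(W_{2β}+μW₂)y` with the open positive orthant of `ℝ³`. -/
noncomputable def OmegaWbeta (n : ℕ) (A B₁ B₂ : Matrix (Fin n) (Fin n) ℝ)
    (a b₁ b₂ : Fin n → ℝ) (γ β μ₁ μ₂ δ₁ δ₂ : ℝ) : Set (Fin 3 → ℝ) :=
  (Set.range (fun y : (Fin n → ℝ) × ℝ =>
    ![(1 / 2) * (y.1 ⬝ᵥ (A *ᵥ y.1)) + y.2 * (a ⬝ᵥ y.1) + γ * y.2 ^ 2,
      sSup ((fun μ => (1 / 2) * (y.1 ⬝ᵥ ((B₁ + μ • B₂) *ᵥ y.1))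
        + y.2 * ((b₁ + δ₁ • b₂) ⬝ᵥ y.1) - β * y.2 ^ 2) '' Icc μ₁ μ₂),
      sSup ((fun μ => (1 / 2) * (y.1 ⬝ᵥ ((B₁ + μ • B₂) *ᵥ y.1))
        + y.2 * ((b₁ + δ₂ • b₂) ⬝ᵥ y.1) - β * y.2 ^ 2) '' Icc μ₁ μ₂)]))
  + {z : Fin 3 → ℝ | ∀ i, 0 < z i}

open Filter

lemma nonneg_slope_of_forall_add_mul_pos {a b : ℝ} (h : ∀ R > 0, 0 < a + R * b) : 0 ≤ b := by
  by_contra! hb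
  have := h ((|a| + 1) / -b) (div_pos (by positivity) (by linarith))
  rw [div_mul_eq_mul_div, div_neg, mul_div_cancel_right₀ _ hb.ne] at this
  linarith [le_abs_self a]

lemma nonneg_of_forall_add_mul_pos {a b : ℝ} (h : ∀ ε > 0, 0 < a + ε * b) : 0 ≤ a := by
  refine nonneg_slope_of_forall_add_mul_pos (a := b) fun R hR => ?_
  have := mul_pos hR (h R⁻¹ (inv_pos.2 hR))
  rwa [mul_add, ← mul_assoc, mul_inv_cancel₀ hR.ne', one_mul, add_comm] at this

lemma add_mul_le_max_of_mem_Icc {c d μ₁ μ₂ μ : ℝ} (hμ : μ ∈ Icc μ₁ μ₂) :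
    c + μ * d ≤ max (c + μ₁ * d) (c + μ₂ * d) := by
  rcases le_total 0 d with hd | hd
  · exact le_max_of_le_right (by nlinarith [hμ.2])
  · exact le_max_of_le_left (by nlinarith [hμ.1])

lemma sSup_image_Icc_eq_max {f : ℝ → ℝ} {c d μ₁ μ₂ : ℝ} (hf : ∀ μ, f μ = c + μ * d)
    (hμ : μ₁ ≤ μ₂) : sSup (f '' Icc μ₁ μ₂) = max (f μ₁) (f μ₂) := by
  obtain rfl : f = fun μ => c + μ * d := funext hf
  refine IsGreatest.csSup_eq ⟨?_, ?_⟩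
  · rcases max_choice (c + μ₁ * d) (c + μ₂ * d) with h | h <;> rw [h]
    exacts [⟨μ₁, left_mem_Icc.2 hμ, rfl⟩, ⟨μ₂, right_mem_Icc.2 hμ, rfl⟩]
  · rintro _ ⟨μ, hμ, rfl⟩
    exact add_mul_le_max_of_mem_Icc hμ

lemma corners_of_forall_mem_Icc {P : ℝ → ℝ → Prop} {μ₁ μ₂ δ₁ δ₂ : ℝ} (hμ : μ₁ ≤ μ₂)
    (hδ : δ₁ ≤ δ₂) (h : ∀ μ ∈ Icc μ₁ μ₂, ∀ δ ∈ Icc δ₁ δ₂, P μ δ) :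
    P μ₁ δ₁ ∧ P μ₂ δ₁ ∧ P μ₁ δ₂ ∧ P μ₂ δ₂ :=
  ⟨h _ (left_mem_Icc.2 hμ) _ (left_mem_Icc.2 hδ), h _ (right_mem_Icc.2 hμ) _ (left_mem_Icc.2 hδ),
    h _ (left_mem_Icc.2 hμ) _ (right_mem_Icc.2 hδ), h _ (right_mem_Icc.2 hμ) _ (right_mem_Icc.2 hδ)⟩

lemma add_mul_add_mul_le_of_corners {c d e β μ₁ μ₂ δ₁ δ₂ μ δ : ℝ} (hμ : μ ∈ Icc μ₁ μ₂)
    (hδ : δ ∈ Icc δ₁ δ₂) (h₁₁ : c + μ₁ * d + δ₁ * e ≤ β) (h₂₁ : c + μ₂ * d + δ₁ * e ≤ β)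
    (h₁₂ : c + μ₁ * d + δ₂ * e ≤ β) (h₂₂ : c + μ₂ * d + δ₂ * e ≤ β) :
    c + μ * d + δ * e ≤ β := by
  rcases le_total 0 d with hd | hd <;> rcases le_total 0 e with he | he <;>
    nlinarith [hμ.1, hμ.2, hδ.1, hδ.2]

lemma exists_mem_Icc_mul_max_add_mul_max_eq {l₁ l₂ δ₁ δ₂ : ℝ} (hl₁ : 0 ≤ l₁) (hl₂ : 0 ≤ l₂)
    (hδ : δ₁ ≤ δ₂) (μ₁ μ₂ : ℝ) :
    ∃ δ ∈ Icc δ₁ δ₂, ∀ c d e : ℝ,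
      l₁ * max (c + μ₁ * d + δ₁ * e) (c + μ₂ * d + δ₁ * e)
        + l₂ * max (c + μ₁ * d + δ₂ * e) (c + μ₂ * d + δ₂ * e)
      = (l₁ + l₂) * max (c + μ₁ * d + δ * e) (c + μ₂ * d + δ * e) := by
  obtain ⟨δ, hδ', hsum⟩ : ∃ δ ∈ Icc δ₁ δ₂, (l₁ + l₂) * δ = l₁ * δ₁ + l₂ * δ₂ := by
    rcases (add_nonneg hl₁ hl₂).eq_or_lt with h | h
    · exact ⟨δ₁, left_mem_Icc.2 hδ, by nlinarith⟩
    · refine ⟨_, convex_Icc (𝕜 := ℝ) δ₁ δ₂ (left_mem_Icc.2 hδ) (right_mem_Icc.2 hδ)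
        (div_nonneg hl₁ h.le) (div_nonneg hl₂ h.le) (by field_simp), ?_⟩
      simp only [smul_eq_mul]
      field_simp
  refine ⟨δ, hδ', fun c d e => ?_⟩
  -- the maximum over `μ` is attained at the same end point for every `δ`
  have hmax : ∀ δ', max (c + μ₁ * d + δ' * e) (c + μ₂ * d + δ' * e)
      = max (μ₁ * d) (μ₂ * d) + (c + δ' * e) := fun δ' => by
    rw [← max_add_add_right]; ring_nf
  rw [hmax, hmax, hmax]
  linear_combination e * hsum.symm

lemma ContinuousLinearMap.apply_eq_dotProduct {ι : Type*} [Fintype ι] [DecidableEq ι]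
    (f : (ι → ℝ) →L[ℝ] ℝ) (z : ι → ℝ) : f z = (fun i => f (Pi.single i 1)) ⬝ᵥ z := by
  conv_lhs => rw [← Finset.univ_sum_single z]
  simp only [map_sum, dotProduct]
  refine Finset.sum_congr rfl fun i _ => ?_
  rw [mul_comm, ← smul_eq_mul, ← map_smul, ← Pi.single_smul', smul_eq_mul, mul_one]

lemma zero_mem_add_setOf_pos_iff {ι : Type*} {C : Set (ι → ℝ)} :
    0 ∈ C + {z | ∀ i, 0 < z i} ↔ ∃ z ∈ C, ∀ i, z i < 0 := by
  constructor
  · rintro ⟨z, hz, p, hp, h⟩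
    exact ⟨z, hz, fun i => by linarith [hp i, show z i + p i = 0 from congrFun h i]⟩
  · rintro ⟨z, hz, h⟩
    exact ⟨z, hz, -z, fun i => neg_pos.2 (h i), add_neg_cancel z⟩

theorem exists_nonneg_dotProduct_nonneg {ι : Type*} [Fintype ι] {C : Set (ι → ℝ)}
    (hC : C.Nonempty) (hconv : Convex ℝ (C + {z | ∀ i, 0 < z i}))
    (h0 : (0 : ι → ℝ) ∉ C + {z | ∀ i, 0 < z i}) :
    ∃ θ : ι → ℝ, (∀ i, 0 ≤ θ i) ∧ 0 < ∑ i, θ i ∧ ∀ z ∈ C, 0 ≤ θ ⬝ᵥ z := by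
  classical
  have hopen : IsOpen (C + {z : ι → ℝ | ∀ i, 0 < z i}) := by
    refine IsOpen.add_left ?_
    rw [Set.ofPred_forall]
    exact isOpen_iInter_of_finite fun i => isOpen_lt continuous_const (continuous_apply i)
  obtain ⟨f, hf⟩ := geometric_hahn_banach_point_open hconv hopen h0
  set θ : ι → ℝ := fun i => f (Pi.single i 1)
  have hpos : ∀ z ∈ C, ∀ p : ι → ℝ, (∀ i, 0 < p i) → 0 < θ ⬝ᵥ z + θ ⬝ᵥ p := fun z hz p hp => by
    have := hf (z + p) (Set.add_mem_add hz hp)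
    rwa [map_zero, f.apply_eq_dotProduct, dotProduct_add] at this
  obtain ⟨z₀, hz₀⟩ := hC
  have hθ : ∀ i, 0 ≤ θ i := fun i => by
    refine nonneg_slope_of_forall_add_mul_pos (a := θ ⬝ᵥ z₀ + θ ⬝ᵥ 1) fun R hR => ?_
    have := hpos z₀ hz₀ (1 + R • Pi.single i 1) fun j => by
      rcases eq_or_ne j i with rfl | hj
      · simp only [Pi.add_apply, Pi.one_apply, Pi.smul_apply, Pi.single_eq_same, smul_eq_mul]
        linarith
      · simp [hj]
    simpa [dotProduct_add, dotProduct_smul, dotProduct_single, add_assoc] using this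
  refine ⟨θ, hθ, Finset.sum_pos' (fun i _ => hθ i) ?_, fun z hz => ?_⟩
  · by_contra! hθ0
    have hθ0 : θ = 0 := funext fun i => le_antisymm (hθ0 i (Finset.mem_univ i)) (hθ i)
    simpa [hθ0] using hpos z₀ hz₀ 1 fun _ => one_pos
  · refine nonneg_of_forall_add_mul_pos (b := θ ⬝ᵥ 1) fun ε hε => ?_
    simpa [dotProduct_smul] using hpos z hz (ε • 1) fun _ => by simpa using hε

theorem exists_nonneg_combination_nonneg {Y : Type*} (v : Y → Fin 3 → ℝ)
    (hconv : Convex ℝ (range v + {z | ∀ i, 0 < z i}))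
    (h0 : (0 : Fin 3 → ℝ) ∉ range v + {z | ∀ i, 0 < z i})
    (hslater : ∃ y, v y 1 < 0 ∧ v y 2 < 0) :
    ∃ l₁ l₂ : ℝ, 0 ≤ l₁ ∧ 0 ≤ l₂ ∧ ∀ y, 0 ≤ v y 0 + l₁ * v y 1 + l₂ * v y 2 := by
  obtain ⟨y₀, h₁, h₂⟩ := hslater
  obtain ⟨θ, hθ, hsum, hθv⟩ := exists_nonneg_dotProduct_nonneg
    (⟨v y₀, y₀, rfl⟩ : (range v).Nonempty) hconv h0
  rw [Fin.sum_univ_three] at hsum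
  have hθv' : ∀ y, 0 ≤ θ 0 * v y 0 + θ 1 * v y 1 + θ 2 * v y 2 := fun y => by
    simpa [dotProduct, Fin.sum_univ_three] using hθv _ ⟨y, rfl⟩
  have hθ₀ : 0 < θ 0 := by
    by_contra! h
    have := hθv' y₀
    rw [le_antisymm h (hθ 0), zero_mul, zero_add] at this
    rcases (hθ 1).eq_or_lt with h₁' | h₁'
    · nlinarith [mul_neg_of_pos_of_neg (by linarith [hθ 0] : 0 < θ 2) h₂]
    · nlinarith [mul_neg_of_pos_of_neg h₁' h₁, mul_nonpos_of_nonneg_of_nonpos (hθ 2) h₂.le]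
  refine ⟨θ 1 / θ 0, θ 2 / θ 0, div_nonneg (hθ 1) hθ₀.le, div_nonneg (hθ 2) hθ₀.le, fun y => ?_⟩
  have : v y 0 + θ 1 / θ 0 * v y 1 + θ 2 / θ 0 * v y 2
      = (θ 0 * v y 0 + θ 1 * v y 1 + θ 2 * v y 2) / θ 0 := by
    field_simp
  rw [this]
  exact div_nonneg (hθv' y) hθ₀.le

section QuadraticForm

variable {V : Type*} [AddCommGroup V] [Module ℝ V]

lemma QuadraticMap.apply_smul_add_smul (Q : QuadraticForm ℝ V) (c s : ℝ) (u v : V) :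
    Q (c • u + s • v) = c ^ 2 * Q u + s ^ 2 * Q v + c * s * polar Q u v := by
  simp only [QuadraticMap.map_add Q, QuadraticMap.map_smul, QuadraticMap.polar_smul_left,
    QuadraticMap.polar_smul_right, smul_eq_mul]
  ring

lemma exists_isotropic_of_traceless (α β : ℝ) :
    ∃ c s : ℝ, c ^ 2 + s ^ 2 ≠ 0 ∧ α * (c ^ 2 - s ^ 2) + β * (c * s) = 0 := by
  rcases eq_or_ne α 0 with rfl | hα
  · exact ⟨1, 0, by norm_num, by ring⟩
  · have hr := Real.sq_sqrt (by positivity : (0 : ℝ) ≤ 4 * α ^ 2 + β ^ 2)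
    refine ⟨2 * α, √(4 * α ^ 2 + β ^ 2) + β, by positivity, ?_⟩
    linear_combination (-α) * hr

/-- The plane `span {u, v}` is mapped onto a cone over an ellipse centred at
`(Q u + Q v) / 2`; the line through that centre and the origin meets the ellipse in two
antipodal points, one of which lies on the ray through `Q u + Q v`. -/
theorem QuadraticMap.exists_pair_apply_eq_add (Q₁ Q₂ : QuadraticForm ℝ V) (u v : V) :
    ∃ y, Q₁ y = Q₁ u + Q₁ v ∧ Q₂ y = Q₂ u + Q₂ v := by
  set S₁ := Q₁ u + Q₁ v
  set S₂ := Q₂ u + Q₂ v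
  by_cases hS : S₁ = 0 ∧ S₂ = 0
  · exact ⟨0, by simp [hS.1], by simp [hS.2]⟩
  have hSpos : 0 < S₁ ^ 2 + S₂ ^ 2 := by
    rcases not_and_or.1 hS with h | h <;> positivity
  obtain ⟨c, s, hcs, hcross⟩ := exists_isotropic_of_traceless
    (Q₁ u * S₂ - Q₂ u * S₁) (polar Q₁ u v * S₂ - polar Q₂ u v * S₁)
  -- `y₁` and `y₂` are orthogonal in the `(c, s)`-plane, so their values add up to `(c² + s²) S`.
  set y₁ := c • u + s • v
  set y₂ := (-s) • u + c • v
  have hsum₁ : Q₁ y₁ + Q₁ y₂ = (c ^ 2 + s ^ 2) * S₁ := by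
    simp only [y₁, y₂, Q₁.apply_smul_add_smul, S₁]; ring
  have hsum₂ : Q₂ y₁ + Q₂ y₂ = (c ^ 2 + s ^ 2) * S₂ := by
    simp only [y₁, y₂, Q₂.apply_smul_add_smul, S₂]; ring
  have hpar : Q₁ y₁ * S₂ = Q₂ y₁ * S₁ := by
    simp only [y₁, Q₁.apply_smul_add_smul, Q₂.apply_smul_add_smul]
    linear_combination hcross
  obtain ⟨κ, hκ₁, hκ₂⟩ : ∃ κ, Q₁ y₁ = κ * S₁ ∧ Q₂ y₁ = κ * S₂ :=
    ⟨(Q₁ y₁ * S₁ + Q₂ y₁ * S₂) / (S₁ ^ 2 + S₂ ^ 2), by field_simp; linear_combination S₂ * hpar,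
      by field_simp; linear_combination -S₁ * hpar⟩
  obtain ⟨z, k, hk, hz₁, hz₂⟩ : ∃ z k, 0 < k ∧ Q₁ z = k * S₁ ∧ Q₂ z = k * S₂ := by
    rcases lt_or_ge 0 κ with hκ | hκ
    · exact ⟨y₁, κ, hκ, hκ₁, hκ₂⟩
    · have : 0 < c ^ 2 + s ^ 2 := lt_of_le_of_ne (by positivity) hcs.symm
      exact ⟨y₂, c ^ 2 + s ^ 2 - κ, by linarith, by linear_combination hsum₁ - hκ₁,
        by linear_combination hsum₂ - hκ₂⟩
  have hscale : ∀ Q : QuadraticForm ℝ V, Q ((√k)⁻¹ • z) = k⁻¹ * Q z := fun Q => by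
    rw [QuadraticMap.map_smul, smul_eq_mul, ← mul_inv, Real.mul_self_sqrt hk.le]
  exact ⟨(√k)⁻¹ • z, by rw [hscale, hz₁, inv_mul_cancel_left₀ hk.ne'],
    by rw [hscale, hz₂, inv_mul_cancel_left₀ hk.ne']⟩

theorem QuadraticMap.convex_range_pair (Q₁ Q₂ : QuadraticForm ℝ V) :
    Convex ℝ (range fun y => ![Q₁ y, Q₂ y]) := by
  rintro _ ⟨u, rfl⟩ _ ⟨v, rfl⟩ a b ha hb -
  obtain ⟨y, hy₁, hy₂⟩ := QuadraticMap.exists_pair_apply_eq_add Q₁ Q₂ (√a • u) (√b • v)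
  refine ⟨y, ?_⟩
  simp only [QuadraticMap.map_smul, Real.mul_self_sqrt ha, Real.mul_self_sqrt hb,
    smul_eq_mul] at hy₁ hy₂
  ext i
  fin_cases i <;> simp [hy₁, hy₂]

theorem QuadraticMap.exists_convex_comb_nonneg (Q₁ Q₂ : QuadraticForm ℝ V)
    (h : ∀ y, 0 ≤ max (Q₁ y) (Q₂ y)) :
    ∃ t ∈ Icc (0 : ℝ) 1, ∀ y, 0 ≤ t * Q₁ y + (1 - t) * Q₂ y := by
  have hconv : Convex ℝ ((range fun y => ![Q₁ y, Q₂ y]) + {z | ∀ i, 0 < z i}) :=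
    (Q₁.convex_range_pair Q₂).add <| by
      rw [Set.ofPred_forall]
      exact convex_iInter fun i => convex_halfSpace_gt (LinearMap.proj i).isLinear 0
  have h0 : (0 : Fin 2 → ℝ) ∉ (range fun y => ![Q₁ y, Q₂ y]) + {z | ∀ i, 0 < z i} := by
    rw [zero_mem_add_setOf_pos_iff]
    rintro ⟨_, ⟨y, rfl⟩, hy⟩
    exact (max_lt (hy 0) (hy 1)).not_ge (h y)
  obtain ⟨θ, hθ, hsum, hθC⟩ := exists_nonneg_dotProduct_nonneg (range_nonempty _) hconv h0
  rw [Fin.sum_univ_two] at hsum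
  refine ⟨θ 0 / (θ 0 + θ 1), ⟨by have := hθ 0; positivity, ?_⟩, fun y => ?_⟩
  · rw [div_le_one hsum]; linarith [hθ 1]
  · have := hθC _ ⟨y, rfl⟩
    simp only [dotProduct, Fin.sum_univ_two, Matrix.cons_val_zero, Matrix.cons_val_one] at this
    rw [one_sub_div hsum.ne', add_sub_cancel_left, div_mul_eq_mul_div, div_mul_eq_mul_div,
      ← add_div]
    exact div_nonneg (by linarith) hsum.le

end QuadraticForm

section QuadFun

variable {ι : Type*} [Fintype ι]

noncomputable def quadFun (M : Matrix ι ι ℝ) (w x : ι → ℝ) : ℝ := 1 / 2 * (x ⬝ᵥ M *ᵥ x) + w ⬝ᵥ x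

lemma Matrix.IsSymm.dotProduct_mulVec_comm {M : Matrix ι ι ℝ} (hM : M.IsSymm) (x y : ι → ℝ) :
    x ⬝ᵥ M *ᵥ y = y ⬝ᵥ M *ᵥ x := by
  rw [dotProduct_mulVec, ← mulVec_transpose, hM, dotProduct_comm]

lemma quadFun_add {M : Matrix ι ι ℝ} (hM : M.IsSymm) (w x u : ι → ℝ) :
    quadFun M w (x + u) = quadFun M w x + (M *ᵥ x + w) ⬝ᵥ u + 1 / 2 * (u ⬝ᵥ M *ᵥ u) := by
  simp only [quadFun, mulVec_add, dotProduct_add, add_dotProduct, dotProduct_comm _ u,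
    hM.dotProduct_mulVec_comm x u]
  ring

lemma quadFun_add_smul (M M' : Matrix ι ι ℝ) (w w' x : ι → ℝ) (l : ℝ) :
    quadFun (M + l • M') (w + l • w') x = quadFun M w x + l * quadFun M' w' x := by
  simp only [quadFun, add_mulVec, smul_mulVec, dotProduct_add, dotProduct_smul, add_dotProduct,
    smul_dotProduct, smul_eq_mul]
  ring

lemma quadFun_add_smul_add_smul (M M' : Matrix ι ι ℝ) (w w' x : ι → ℝ) (μ δ : ℝ) :
    quadFun (M + μ • M') (w + δ • w') x
      = quadFun M w x + μ * (1 / 2 * (x ⬝ᵥ M' *ᵥ x)) + δ * (w' ⬝ᵥ x) := by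
  simp only [quadFun, add_mulVec, smul_mulVec, dotProduct_add, dotProduct_smul, add_dotProduct,
    smul_dotProduct, smul_eq_mul]
  ring

lemma quadFun_le_of_mulVec_eq_neg {M : Matrix ι ι ℝ} (hM : M.IsSymm)
    (hpsd : ∀ z, 0 ≤ z ⬝ᵥ M *ᵥ z) {w x : ι → ℝ} (hx : M *ᵥ x = -w) (y : ι → ℝ) :
    quadFun M w x ≤ quadFun M w y := by
  have := quadFun_add hM w x (y - x)
  rw [add_sub_cancel, hx, neg_add_cancel, zero_dotProduct] at this
  linarith [hpsd (y - x)]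

lemma mulVec_eq_neg_of_forall_quadFun_le {M : Matrix ι ι ℝ} (hM : M.IsSymm) {w x : ι → ℝ}
    (hmin : ∀ y, quadFun M w x ≤ quadFun M w y) : M *ᵥ x = -w := by
  set g := M *ᵥ x + w with hg
  -- `s ↦ s (g ⬝ g) + s² (…)` is nonnegative, so its linear coefficient vanishes
  have hdisc : discrim (1 / 2 * (g ⬝ᵥ M *ᵥ g)) (g ⬝ᵥ g) 0 ≤ 0 := discrim_le_zero fun s => by
    have := hmin (x + s • g)
    rw [quadFun_add hM, ← hg] at this
    simp only [mulVec_smul, dotProduct_smul, smul_dotProduct, smul_eq_mul] at this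
    linarith
  have hg : g ⬝ᵥ g = 0 := by
    rw [discrim] at hdisc
    nlinarith
  rw [dotProduct_self_eq_zero] at hg
  exact eq_neg_of_add_eq_zero_left hg

lemma eventually_quadFun_add_smul_lt {M : Matrix ι ι ℝ} (hM : M.IsSymm) {x : ι → ℝ}
    (hx : x ⬝ᵥ M *ᵥ x < 0) (w x₀ : ι → ℝ) :
    ∀ᶠ s : ℝ in atTop, quadFun M w (x₀ + s • x) < quadFun M w x₀ := by
  filter_upwards [eventually_gt_atTop 0,
    eventually_gt_atTop (2 * ((M *ᵥ x₀ + w) ⬝ᵥ x) / -(x ⬝ᵥ M *ᵥ x))] with s hs₀ hs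
  rw [div_lt_iff₀ (by linarith)] at hs
  rw [quadFun_add hM]
  simp only [mulVec_smul, dotProduct_smul, smul_dotProduct, smul_eq_mul]
  nlinarith

/-- `½ yᵀ [[M, w], [wᵀ, 2r]] y` for `y = (x, t)`, the paper's `½ yᵀ H₀ y` and `½ yᵀ W y`. -/
noncomputable def homogQuad (M : Matrix ι ι ℝ) (w : ι → ℝ) (r : ℝ) :
    QuadraticForm ℝ ((ι → ℝ) × ℝ) :=
  (1 / 2 : ℝ) • (LinearMap.BilinMap.toQuadraticMap
      ((dotProductBilin ℝ ℝ).compl₂ M.mulVecLin)).comp (LinearMap.fst ℝ _ ℝ)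
    + QuadraticMap.linMulLin (LinearMap.snd ℝ _ ℝ)
      ((dotProductBilin ℝ ℝ w).comp (LinearMap.fst ℝ _ ℝ))
    + r • QuadraticMap.sq.comp (LinearMap.snd ℝ _ ℝ)

lemma homogQuad_apply (M : Matrix ι ι ℝ) (w : ι → ℝ) (r : ℝ) (y : (ι → ℝ) × ℝ) :
    homogQuad M w r y = 1 / 2 * (y.1 ⬝ᵥ M *ᵥ y.1) + y.2 * (w ⬝ᵥ y.1) + r * y.2 ^ 2 := by
  simp [homogQuad, sq]

lemma homogQuad_apply_one (M : Matrix ι ι ℝ) (w x : ι → ℝ) (r : ℝ) :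
    homogQuad M w r (x, 1) = quadFun M w x + r := by
  simp [homogQuad_apply, quadFun]

lemma homogQuad_apply_zero (M : Matrix ι ι ℝ) (w x : ι → ℝ) (r : ℝ) :
    homogQuad M w r (x, 0) = 1 / 2 * (x ⬝ᵥ M *ᵥ x) := by
  simp [homogQuad_apply]

lemma homogQuad_apply_of_ne_zero (M : Matrix ι ι ℝ) (w x : ι → ℝ) (r : ℝ) {t : ℝ}
    (ht : t ≠ 0) : homogQuad M w r (x, t) = t ^ 2 * (quadFun M w (t⁻¹ • x) + r) := by
  simp only [homogQuad_apply, quadFun, mulVec_smul, dotProduct_smul, smul_dotProduct, smul_eq_mul]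
  field_simp

lemma homogQuad_add_smul (M M' : Matrix ι ι ℝ) (w w' : ι → ℝ) (r r' l : ℝ)
    (y : (ι → ℝ) × ℝ) :
    homogQuad (M + l • M') (w + l • w') (r + l * r') y
      = homogQuad M w r y + l * homogQuad M' w' r' y := by
  simp only [homogQuad_apply, add_mulVec, smul_mulVec, dotProduct_add, dotProduct_smul,
    add_dotProduct, smul_dotProduct, smul_eq_mul]
  ring

lemma homogQuad_add_smul_add_smul (M M' : Matrix ι ι ℝ) (w w' : ι → ℝ) (r μ δ : ℝ)
    (y : (ι → ℝ) × ℝ) :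
    homogQuad (M + μ • M') (w + δ • w') r y
      = homogQuad M w r y + μ * homogQuad M' 0 0 y + δ * homogQuad 0 w' 0 y := by
  simp only [homogQuad_apply, add_mulVec, smul_mulVec, dotProduct_add, dotProduct_smul,
    add_dotProduct, smul_dotProduct, smul_eq_mul, zero_mulVec, dotProduct_zero, zero_dotProduct]
  ring

/-- Rescale `y = (x, t)` to `t = 1`; if `t = 0`, move from `x₀` far out along `x`, a common
direction of negative curvature. -/
theorem exists_forall_quadFun_add_neg {K : Type*} [Finite K] {M : K → Matrix ι ι ℝ}
    (hM : ∀ k, (M k).IsSymm) {w : K → ι → ℝ} {r : K → ℝ} {x₀ : ι → ℝ}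
    (hx₀ : ∀ k, quadFun (M k) (w k) x₀ + r k ≤ 0) {y : (ι → ℝ) × ℝ}
    (hy : ∀ k, homogQuad (M k) (w k) (r k) y < 0) :
    ∃ x, ∀ k, quadFun (M k) (w k) x + r k < 0 := by
  obtain ⟨x, t⟩ := y
  rcases eq_or_ne t 0 with rfl | ht
  · have hev := fun k => eventually_quadFun_add_smul_lt (hM k)
      (by linarith [homogQuad_apply_zero (M k) (w k) x (r k), hy k]) (w k) x₀
    obtain ⟨s, hs⟩ := (eventually_all.2 hev).exists
    exact ⟨x₀ + s • x, fun k => by linarith [hs k, hx₀ k]⟩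
  · refine ⟨t⁻¹ • x, fun k => ?_⟩
    have := hy k
    rw [homogQuad_apply_of_ne_zero _ _ _ _ ht] at this
    exact neg_of_mul_neg_right this (sq_nonneg t)

lemma dotProduct_mulVec_nonneg_of_homogQuad_nonneg {M : Matrix ι ι ℝ} {w : ι → ℝ} {r : ℝ}
    (h : ∀ y, 0 ≤ homogQuad M w r y) (z : ι → ℝ) : 0 ≤ z ⬝ᵥ M *ᵥ z := by
  linarith [h (z, 0), homogQuad_apply_zero M w z r]

lemma mulVec_eq_neg_of_homogQuad_nonneg {M : Matrix ι ι ℝ} (hM : M.IsSymm) {w x : ι → ℝ}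
    {r : ℝ} (h : ∀ y, 0 ≤ homogQuad M w r y) (hx : homogQuad M w r (x, 1) ≤ 0) :
    M *ᵥ x = -w :=
  mulVec_eq_neg_of_forall_quadFun_le hM fun y => by
    linarith [h (y, 1), homogQuad_apply_one M w x r, homogQuad_apply_one M w y r]

def IsRobustFeasible (B₁ B₂ : Matrix ι ι ℝ) (b₁ b₂ : ι → ℝ) (β μ₁ μ₂ δ₁ δ₂ : ℝ) (x : ι → ℝ) :
    Prop :=
  ∀ μ ∈ Icc μ₁ μ₂, ∀ δ ∈ Icc δ₁ δ₂, quadFun (B₁ + μ • B₂) (b₁ + δ • b₂) x ≤ β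

lemma isRobustFeasible_of_corners {B₁ B₂ : Matrix ι ι ℝ} {b₁ b₂ x : ι → ℝ} {β μ₁ μ₂ δ₁ δ₂ : ℝ}
    (h₁₁ : quadFun (B₁ + μ₁ • B₂) (b₁ + δ₁ • b₂) x ≤ β)
    (h₂₁ : quadFun (B₁ + μ₂ • B₂) (b₁ + δ₁ • b₂) x ≤ β)
    (h₁₂ : quadFun (B₁ + μ₁ • B₂) (b₁ + δ₂ • b₂) x ≤ β)
    (h₂₂ : quadFun (B₁ + μ₂ • B₂) (b₁ + δ₂ • b₂) x ≤ β) :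
    IsRobustFeasible B₁ B₂ b₁ b₂ β μ₁ μ₂ δ₁ δ₂ x := fun μ hμ δ hδ => by
  simp only [quadFun_add_smul_add_smul] at *
  exact add_mul_add_mul_le_of_corners hμ hδ h₁₁ h₂₁ h₁₂ h₂₂

theorem quadFun_le_of_kkt {M C : Matrix ι ι ℝ} {w c x₀ x : ι → ℝ} {β l : ℝ}
    (hsymm : (M + l • C).IsSymm) (hl : 0 ≤ l) (hstat : (M + l • C) *ᵥ x₀ = -(w + l • c))
    (hcompl : l * (quadFun C c x₀ - β) = 0) (hpsd : ∀ z, 0 ≤ z ⬝ᵥ (M + l • C) *ᵥ z)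
    (hx : quadFun C c x ≤ β) : quadFun M w x₀ ≤ quadFun M w x := by
  have := quadFun_le_of_mulVec_eq_neg hsymm hpsd hstat x
  rw [quadFun_add_smul, quadFun_add_smul] at this
  nlinarith

theorem kkt_of_homogQuad_nonneg {M C : Matrix ι ι ℝ} {w c x₀ : ι → ℝ} {β l : ℝ}
    (hsymm : (M + l • C).IsSymm) (hl : 0 ≤ l) (hx₀ : quadFun C c x₀ ≤ β)
    (hL : ∀ y, 0 ≤ homogQuad (M + l • C) (w + l • c) (-quadFun M w x₀ + l * -β) y) :
    (M + l • C) *ᵥ x₀ = -(w + l • c) ∧ l * (quadFun C c x₀ - β) = 0 ∧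
      ∀ z, 0 ≤ z ⬝ᵥ (M + l • C) *ᵥ z := by
  have hval : homogQuad (M + l • C) (w + l • c) (-quadFun M w x₀ + l * -β) (x₀, 1)
      = l * (quadFun C c x₀ - β) := by
    rw [homogQuad_apply_one, quadFun_add_smul]; ring
  have hcompl : l * (quadFun C c x₀ - β) = 0 :=
    le_antisymm (mul_nonpos_of_nonneg_of_nonpos hl (by linarith)) (hval ▸ hL (x₀, 1))
  exact ⟨mulVec_eq_neg_of_homogQuad_nonneg hsymm hL (by rw [hval, hcompl]), hcompl,
    dotProduct_mulVec_nonneg_of_homogQuad_nonneg hL⟩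

end QuadFun

section OmegaWbeta

variable {n : ℕ} {A B₁ B₂ : Matrix (Fin n) (Fin n) ℝ} {a b₁ b₂ : Fin n → ℝ} {β μ₁ μ₂ δ₁ δ₂ : ℝ}

lemma OmegaWbeta_eq (γ : ℝ) (hμ : μ₁ ≤ μ₂) :
    OmegaWbeta n A B₁ B₂ a b₁ b₂ γ β μ₁ μ₂ δ₁ δ₂ =
      (range fun y => ![homogQuad A a γ y,
        max (homogQuad (B₁ + μ₁ • B₂) (b₁ + δ₁ • b₂) (-β) y)
          (homogQuad (B₁ + μ₂ • B₂) (b₁ + δ₁ • b₂) (-β) y),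
        max (homogQuad (B₁ + μ₁ • B₂) (b₁ + δ₂ • b₂) (-β) y)
          (homogQuad (B₁ + μ₂ • B₂) (b₁ + δ₂ • b₂) (-β) y)]) + {z | ∀ i, 0 < z i} := by
  have hsup : ∀ (δ : ℝ) (y : (Fin n → ℝ) × ℝ),
      sSup ((fun μ => 1 / 2 * (y.1 ⬝ᵥ ((B₁ + μ • B₂) *ᵥ y.1))
        + y.2 * ((b₁ + δ • b₂) ⬝ᵥ y.1) - β * y.2 ^ 2) '' Icc μ₁ μ₂)
      = max (homogQuad (B₁ + μ₁ • B₂) (b₁ + δ • b₂) (-β) y)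
          (homogQuad (B₁ + μ₂ • B₂) (b₁ + δ • b₂) (-β) y) := fun δ y => by
    have hfun : (fun μ : ℝ => 1 / 2 * (y.1 ⬝ᵥ ((B₁ + μ • B₂) *ᵥ y.1))
        + y.2 * ((b₁ + δ • b₂) ⬝ᵥ y.1) - β * y.2 ^ 2)
        = fun μ => homogQuad (B₁ + μ • B₂) (b₁ + δ • b₂) (-β) y := by
      ext μ
      rw [homogQuad_apply]
      ring
    refine hfun ▸ sSup_image_Icc_eq_max (c := homogQuad B₁ b₁ (-β) y + δ * homogQuad 0 b₂ 0 y)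
      (d := homogQuad B₂ 0 0 y) (fun μ => by rw [homogQuad_add_smul_add_smul]; ring) hμ
  simp only [OmegaWbeta, hsup, homogQuad_apply]

lemma zero_notMem_OmegaWbeta (hA : A.IsSymm) (hB₁ : B₁.IsSymm) (hB₂ : B₂.IsSymm)
    (hμ : μ₁ ≤ μ₂) (hδ : δ₁ ≤ δ₂) {xbar : Fin n → ℝ}
    (hxbar : IsRobustFeasible B₁ B₂ b₁ b₂ β μ₁ μ₂ δ₁ δ₂ xbar)
    (hopt : ∀ x, IsRobustFeasible B₁ B₂ b₁ b₂ β μ₁ μ₂ δ₁ δ₂ x → quadFun A a xbar ≤ quadFun A a x) :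
    (0 : Fin 3 → ℝ) ∉ OmegaWbeta n A B₁ B₂ a b₁ b₂ (-quadFun A a xbar) β μ₁ μ₂ δ₁ δ₂ := by
  rw [OmegaWbeta_eq _ hμ, zero_mem_add_setOf_pos_iff]
  rintro ⟨_, ⟨y, rfl⟩, hy⟩
  have h₀ := hy 0
  have h₁ := hy 1
  have h₂ := hy 2
  simp only [cons_val, sup_lt_iff] at h₀ h₁ h₂
  obtain ⟨h₁₁, h₂₁, h₁₂, h₂₂⟩ := corners_of_forall_mem_Icc hμ hδ hxbar
  obtain ⟨x, hx⟩ := exists_forall_quadFun_add_neg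
    (M := ![A, B₁ + μ₁ • B₂, B₁ + μ₂ • B₂, B₁ + μ₁ • B₂, B₁ + μ₂ • B₂])
    (w := ![a, b₁ + δ₁ • b₂, b₁ + δ₁ • b₂, b₁ + δ₂ • b₂, b₁ + δ₂ • b₂])
    (r := ![-quadFun A a xbar, -β, -β, -β, -β]) (x₀ := xbar) (y := y)
    (fun k => by fin_cases k <;> simp [hA, hB₁.add (hB₂.smul _)])
    (fun k => by
      fin_cases k <;> simp only [Fin.zero_eta, Fin.mk_one, Fin.reduceFinMk, cons_val] <;> linarith)
    (fun k => by fin_cases k <;> simp [h₀, h₁, h₂])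
  simp only [Fin.forall_fin_succ, cons_val_zero, cons_val_succ, cons_val_fin_one, forall_const,
    add_neg_lt_iff_lt_add, zero_add] at hx
  exact not_le_of_gt hx.1 (hopt x (isRobustFeasible_of_corners hx.2.1.le hx.2.2.1.le
    hx.2.2.2.1.le hx.2.2.2.2.le))

theorem exists_lagrangian_nonneg (hA : A.IsSymm) (hB₁ : B₁.IsSymm) (hB₂ : B₂.IsSymm)
    (hμ : μ₁ ≤ μ₂) (hδ : δ₁ ≤ δ₂) {xbar : Fin n → ℝ}
    (hxbar : IsRobustFeasible B₁ B₂ b₁ b₂ β μ₁ μ₂ δ₁ δ₂ xbar)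
    (hopt : ∀ x, IsRobustFeasible B₁ B₂ b₁ b₂ β μ₁ μ₂ δ₁ δ₂ x → quadFun A a xbar ≤ quadFun A a x)
    (hconv : Convex ℝ (OmegaWbeta n A B₁ B₂ a b₁ b₂ (-quadFun A a xbar) β μ₁ μ₂ δ₁ δ₂))
    (hslater : ∃ x₀, ∀ μ ∈ Icc μ₁ μ₂, ∀ δ ∈ Icc δ₁ δ₂, quadFun (B₁ + μ • B₂) (b₁ + δ • b₂) x₀ < β) :
    ∃ l, 0 ≤ l ∧ ∃ μ ∈ Icc μ₁ μ₂, ∃ δ ∈ Icc δ₁ δ₂, ∀ y, 0 ≤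
      homogQuad (A + l • (B₁ + μ • B₂)) (a + l • (b₁ + δ • b₂)) (-quadFun A a xbar + l * -β) y := by
  have h0 := zero_notMem_OmegaWbeta hA hB₁ hB₂ hμ hδ hxbar hopt
  rw [OmegaWbeta_eq _ hμ] at hconv h0
  obtain ⟨x₀, hx₀⟩ := hslater
  obtain ⟨h₁₁, h₂₁, h₁₂, h₂₂⟩ := corners_of_forall_mem_Icc hμ hδ hx₀
  obtain ⟨l₁, l₂, hl₁, hl₂, hmult⟩ := exists_nonneg_combination_nonneg _ hconv h0 ⟨(x₀, 1), by
    simp only [cons_val, homogQuad_apply_one, max_lt_iff]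
    refine ⟨⟨?_, ?_⟩, ?_, ?_⟩ <;> linarith⟩
  obtain ⟨δ, hδ', hmerge⟩ := exists_mem_Icc_mul_max_add_mul_max_eq hl₁ hl₂ hδ μ₁ μ₂
  set L := fun μ : ℝ => homogQuad (A + (l₁ + l₂) • (B₁ + μ • B₂)) (a + (l₁ + l₂) • (b₁ + δ • b₂))
    (-quadFun A a xbar + (l₁ + l₂) * -β)
  have hL : ∀ μ y, L μ y = homogQuad A a (-quadFun A a xbar) y
      + (l₁ + l₂) * (homogQuad B₁ b₁ (-β) y + μ * homogQuad B₂ 0 0 y + δ * homogQuad 0 b₂ 0 y) :=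
    fun μ y => by rw [homogQuad_add_smul, homogQuad_add_smul_add_smul]
  obtain ⟨t, ht, hyuan⟩ := (L μ₁).exists_convex_comb_nonneg (L μ₂) fun y => by
    have := hmult y
    simp only [cons_val, homogQuad_add_smul_add_smul] at this
    rw [add_assoc, hmerge] at this
    rwa [hL, hL, max_add_add_left, ← mul_max_of_nonneg _ _ (add_nonneg hl₁ hl₂)]
  refine ⟨l₁ + l₂, add_nonneg hl₁ hl₂, t * μ₁ + (1 - t) * μ₂, convex_Icc μ₁ μ₂
    (left_mem_Icc.2 hμ) (right_mem_Icc.2 hμ) ht.1 (sub_nonneg.2 ht.2) (by ring), δ, hδ',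
    fun y => ?_⟩
  have := hyuan y
  rw [hL, hL] at this
  show 0 ≤ L _ y
  rw [hL]
  linear_combination this

end OmegaWbeta

/-- Theorem 4, robust optimality for the one-sided problem. -/
theorem robust_optimality_one_sided (n : ℕ) (A B₁ B₂ : Matrix (Fin n) (Fin n) ℝ)
    (a b₁ b₂ : Fin n → ℝ) (β μ₁ μ₂ δ₁ δ₂ : ℝ)
    (hA : A.IsSymm) (hB₁ : B₁.IsSymm) (hB₂ : B₂.IsSymm)
    (hμ : μ₁ < μ₂) (hδ : δ₁ < δ₂)
    (feasible : (Fin n → ℝ) → Prop)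
    (hfeas : ∀ x, feasible x ↔ ∀ μ ∈ Icc μ₁ μ₂, ∀ δ ∈ Icc δ₁ δ₂,
      (1 / 2) * (x ⬝ᵥ ((B₁ + μ • B₂) *ᵥ x)) + (b₁ + δ • b₂) ⬝ᵥ x ≤ β)
    (f : (Fin n → ℝ) → ℝ)
    (hf : ∀ x, f x = (1 / 2) * (x ⬝ᵥ (A *ᵥ x)) + a ⬝ᵥ x)
    (xbar : Fin n → ℝ) (hxbar : feasible xbar)
    (hconv : Convex ℝ (OmegaWbeta n A B₁ B₂ a b₁ b₂ (-f xbar) β μ₁ μ₂ δ₁ δ₂))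
    (hSlater : ∃ x₀ : Fin n → ℝ, ∀ μ ∈ Icc μ₁ μ₂, ∀ δ ∈ Icc δ₁ δ₂,
      (1 / 2) * (x₀ ⬝ᵥ ((B₁ + μ • B₂) *ᵥ x₀)) + (b₁ + δ • b₂) ⬝ᵥ x₀ < β) :
    (∀ x : Fin n → ℝ, feasible x → f xbar ≤ f x)
    ↔
    (∃ lam : ℝ, 0 ≤ lam ∧ ∃ μ ∈ Icc μ₁ μ₂, ∃ δ ∈ Icc δ₁ δ₂,
      ((A + lam • (B₁ + μ • B₂)) *ᵥ xbar = -(a + lam • (b₁ + δ • b₂))) ∧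
      (lam * ((1 / 2) * (xbar ⬝ᵥ ((B₁ + μ • B₂) *ᵥ xbar))
          + (b₁ + δ • b₂) ⬝ᵥ xbar - β) = 0) ∧
      (∀ z : Fin n → ℝ, 0 ≤ z ⬝ᵥ ((A + lam • (B₁ + μ • B₂)) *ᵥ z))) := by
  obtain rfl : f = quadFun A a := funext hf
  obtain rfl : feasible = IsRobustFeasible B₁ B₂ b₁ b₂ β μ₁ μ₂ δ₁ δ₂ :=
    funext fun x => propext (hfeas x)
  have hsymm : ∀ l μ : ℝ, (A + l • (B₁ + μ • B₂)).IsSymm := fun l μ =>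
    hA.add ((hB₁.add (hB₂.smul μ)).smul l)
  constructor
  · intro hopt
    obtain ⟨l, hl, μ, hμ', δ, hδ', hL⟩ :=
      exists_lagrangian_nonneg hA hB₁ hB₂ hμ.le hδ.le hxbar hopt hconv hSlater
    exact ⟨l, hl, μ, hμ', δ, hδ', kkt_of_homogQuad_nonneg (hsymm l μ) hl (hxbar μ hμ' δ hδ') hL⟩
  · rintro ⟨l, hl, μ, hμ', δ, hδ', hstat, hcompl, hpsd⟩ x hx
    exact quadFun_le_of_kkt (hsymm l μ) hl hstat hcompl hpsd (hx μ hμ' δ hδ')
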